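/- Two infinitesimal deformations (μ_1, ν_1, ρ_1, ψ_1) and (μ_1', ν_1', ρ_1', ψ_1') of a matched pair of Lie algebras (𝔤, 𝔥, ρ, ψ) are equivalent (via maps of the form (id_𝔤 + tf, id_𝔥 + tg)) if and only if the corresponding 2-cocycles (μ_1 ⋉ ρ_1, ψ_1 ⋊ ν_1) and (μ_1' ⋉ ρ_1', ψ_1' ⋊ ν_1') are cohomologous; their difference equals δ_MPL((f,g)). Hence equivalence classes of infinitesimal deformations of (𝔤, 𝔥, ρ, ψ) are in bijection with H²_MPL(𝔤, 𝔥, ρ, ψ). -/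

import Mathlib

/-!
Two deformations agree at order `t⁰`, so `(id + t f, id + t g)` intertwines them exactly when
their first-order terms differ by `δ_MPL (f, g)`.

A quadruple is a matched pair iff its bicrossed product bracket is a Lie bracket. Reshuffling
`(𝔤 ⊕ 𝔥)[t]/(t²) ≅ 𝔤[t]/(t²) ⊕ 𝔥[t]/(t²)` identifies the bicrossed product of a deformed
quadruple with `π + t π₁`, where `π = μ ⋉ ρ + ψ ⋊ ν` and `π₁ = μ₁ ⋉ ρ₁ + ψ₁ ⋊ ν₁`. As `π` is a
Lie bracket, `π + t π₁` is one iff the `t`-coefficient of its Jacobiator vanishes, and that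
coefficient is `[π, π₁]_NR`. So infinitesimal deformations are exactly the `2`-cocycles, and the
two equivalence relations agree.
-/

/-- A bilinear map given as a plain two-argument function. -/
def Bilin (k : Type*) [Field k] {A B C : Type*} [AddCommGroup A] [Module k A]
    [AddCommGroup B] [Module k B] [AddCommGroup C] [Module k C] (f : A → B → C) : Prop :=
  (∀ a a' b, f (a + a') b = f a b + f a' b) ∧
  (∀ (c : k) (a : A) (b : B), f (c • a) b = c • f a b) ∧
  (∀ a b b', f a (b + b') = f a b + f a b') ∧
  (∀ (c : k) (a : A) (b : B), f a (c • b) = c • f a b)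

/-- A Lie algebra structure on `A`, given by a bilinear, alternating bracket
satisfying the Jacobi identity. -/
def IsLieBracketP (k : Type*) [Field k] {A : Type*} [AddCommGroup A] [Module k A]
    (μ : A → A → A) : Prop :=
  Bilin k μ ∧ (∀ x, μ x x = 0) ∧
  (∀ x y z, μ (μ x y) z + μ (μ y z) x + μ (μ z x) y = 0)

/-- `ρ` is a representation (action map) of the Lie algebra `(A, μ)` on `B`. -/
def IsRepP (k : Type*) [Field k] {A B : Type*} [AddCommGroup A] [Module k A]
    [AddCommGroup B] [Module k B] (μ : A → A → A) (ρ : A → B → B) : Prop :=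
  Bilin k ρ ∧ ∀ x y h, ρ (μ x y) h = ρ x (ρ y h) - ρ y (ρ x h)

/-- A matched pair of Lie algebras `(𝔤, 𝔥, ρ, ψ)`. -/
def IsMatchedPairP (k : Type*) [Field k] {G H : Type*} [AddCommGroup G] [Module k G]
    [AddCommGroup H] [Module k H]
    (μ : G → G → G) (ν : H → H → H) (ρ : G → H → H) (ψ : H → G → G) : Prop :=
  IsLieBracketP k μ ∧ IsLieBracketP k ν ∧ IsRepP k μ ρ ∧ IsRepP k ν ψ ∧
  (∀ x h h', ρ x (ν h h') = ν (ρ x h) h' + ν h (ρ x h') + ρ (ψ h' x) h - ρ (ψ h x) h') ∧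
  (∀ h x y, ψ h (μ x y) = μ (ψ h x) y + μ x (ψ h y) + ψ (ρ y h) x - ψ (ρ x h) y)

/-- The bicrossed product bracket on `G × H` associated with the data `(μ, ν, ρ, ψ)`. -/
def bicross {G H : Type*} [AddCommGroup G] [AddCommGroup H]
    (μ : G → G → G) (ν : H → H → H) (ρ : G → H → H) (ψ : H → G → G) :
    G × H → G × H → G × H :=
  fun a b => (μ a.1 b.1 + ψ a.2 b.1 - ψ b.2 a.1, ν a.2 b.2 + ρ a.1 b.2 - ρ b.1 a.2)

/-- The insertion operation `i_f g` of the Nijenhuis-Richardson calculus: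
`(i_f g)(x₁,…,x_{m+n+1}) = Σ_{σ ∈ Sh(m+1,n)} (−1)^σ g(f(x_{σ(1)},…,x_{σ(m+1)}), x_{σ(m+2)},…)`. -/
noncomputable def insNR {G : Type*} [AddCommGroup G]
    (m n : ℕ) (f : (Fin (m+1) → G) → G) (g : (Fin (n+1) → G) → G) :
    (Fin (m+n+1) → G) → G :=
  fun x => ∑ σ : Equiv.Perm (Fin (m+n+1)),
    if (∀ i j : Fin (m+n+1), i < j → ((j : ℕ) < m+1 ∨ m+1 ≤ (i : ℕ)) → σ i < σ j) then
      ((Equiv.Perm.sign σ : ℤ)) •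
        g (Fin.cons (f (fun i => x (σ ⟨i, by omega⟩)))
            (fun i : Fin n => x (σ ⟨m+1+(i:ℕ), by omega⟩)))
    else 0

/-- The Nijenhuis-Richardson bracket `[f,g]_NR = i_f g − (−1)^{mn} i_g f` of
`f ∈ Hom(Λ^{m+1}G, G)` (degree `m`) and `g ∈ Hom(Λ^{n+1}G, G)` (degree `n`). -/
noncomputable def nrB {G : Type*} [AddCommGroup G]
    (m n : ℕ) (f : (Fin (m+1) → G) → G) (g : (Fin (n+1) → G) → G) :
    (Fin (m+n+1) → G) → G :=
  fun x => insNR m n f g x - ((-1 : ℤ)^(m*n)) • insNR n m g f (fun i => x ⟨i, by omega⟩)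

/-- `f` is a skew-symmetric multilinear map (an element of `Hom(Λ^n G, G)`). -/
def IsMultAlt (k : Type*) [Field k] {G : Type*} [AddCommGroup G] [Module k G]
    (n : ℕ) (f : (Fin n → G) → G) : Prop :=
  (∀ (x : Fin n → G) (i : Fin n) (a b : G),
      f (Function.update x i (a + b)) = f (Function.update x i a) + f (Function.update x i b)) ∧
  (∀ (x : Fin n → G) (i : Fin n) (c : k) (a : G),
      f (Function.update x i (c • a)) = c • f (Function.update x i a)) ∧
  (∀ (x : Fin n → G) (i j : Fin n), i ≠ j → x i = x j → f x = 0)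

/-- The arity-2 cochain on `𝔤 ⊕ 𝔥` encoding the quadruple `(μ, ν, ρ, ψ)`:
`π = (μ ⋉ ρ) + (ψ ⋊ ν)`. -/
def mcElt {G H : Type*} [AddCommGroup G] [AddCommGroup H]
    (μ : G → G → G) (ν : H → H → H) (ρ : G → H → H) (ψ : H → G → G) :
    (Fin 2 → G × H) → G × H :=
  fun x => bicross μ ν ρ ψ (x 0) (x 1)

/-- The `𝐤[t]/(t²)`-bilinear extension of `μ + t μ₁` on `G[t]/(t²) ≅ G × G`
(an element `a + t b` is represented by the pair `(a, b)`). -/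
def deform {A B C : Type*} [AddCommGroup A] [AddCommGroup B] [AddCommGroup C]
    (f : A → B → C) (f₁ : A → B → C) : A × A → B × B → C × C :=
  fun a b => (f a.1 b.1, f a.1 b.2 + f a.2 b.1 + f₁ a.1 b.1)

/-- A quadruple of candidate deformation/cocycle data. -/
abbrev Quad (G H : Type*) := (G → G → G) × (H → H → H) × (G → H → H) × (H → G → G)

/-- The quadruple consists of bilinear maps, with skew-symmetric first and second entries. -/
def QuadBil (k : Type*) [Field k] {G H : Type*} [AddCommGroup G] [Module k G]
    [AddCommGroup H] [Module k H] (q : Quad G H) : Prop :=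
  Bilin k q.1 ∧ Bilin k q.2.1 ∧ Bilin k q.2.2.1 ∧ Bilin k q.2.2.2 ∧
  (∀ x, q.1 x x = 0) ∧ (∀ h, q.2.1 h h = 0)

/-- `q = (μ₁, ν₁, ρ₁, ψ₁)` is an infinitesimal deformation of the matched pair
`(μ, ν, ρ, ψ)`: the `t`-deformed structure is a matched pair over `𝐤[t]/(t²)`. -/
def IsInfDef (k : Type*) [Field k] {G H : Type*} [AddCommGroup G] [Module k G]
    [AddCommGroup H] [Module k H]
    (μ : G → G → G) (ν : H → H → H) (ρ : G → H → H) (ψ : H → G → G)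
    (q : Quad G H) : Prop :=
  QuadBil k q ∧
  IsMatchedPairP k (deform μ q.1) (deform ν q.2.1) (deform ρ q.2.2.1) (deform ψ q.2.2.2)

/-- `q` is a `2`-cocycle of the matched pair `(μ, ν, ρ, ψ)`. -/
def IsCocycleMPL (k : Type*) [Field k] {G H : Type*} [AddCommGroup G] [Module k G]
    [AddCommGroup H] [Module k H]
    (μ : G → G → G) (ν : H → H → H) (ρ : G → H → H) (ψ : H → G → G)
    (q : Quad G H) : Prop :=
  QuadBil k q ∧
  ∀ x : Fin 3 → G × H, nrB 1 1 (mcElt μ ν ρ ψ) (mcElt q.1 q.2.1 q.2.2.1 q.2.2.2) x = 0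

/-- Two infinitesimal deformations are equivalent if `(id + tf, id + tg)` is a morphism of
the deformed matched pairs over `𝐤[t]/(t²)`. -/
def DefEquiv (k : Type*) [Field k] {G H : Type*} [AddCommGroup G] [Module k G]
    [AddCommGroup H] [Module k H]
    (μ : G → G → G) (ν : H → H → H) (ρ : G → H → H) (ψ : H → G → G)
    (q q' : Quad G H) : Prop :=
  ∃ f : G →ₗ[k] G, ∃ g : H →ₗ[k] H,
    (∀ a b, (fun p : G × G => (p.1, p.2 + f p.1)) (deform μ q.1 a b) =
      deform μ q'.1 (a.1, a.2 + f a.1) (b.1, b.2 + f b.1)) ∧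
    (∀ a b, (fun p : H × H => (p.1, p.2 + g p.1)) (deform ν q.2.1 a b) =
      deform ν q'.2.1 (a.1, a.2 + g a.1) (b.1, b.2 + g b.1)) ∧
    (∀ a b, (fun p : H × H => (p.1, p.2 + g p.1)) (deform ρ q.2.2.1 a b) =
      deform ρ q'.2.2.1 (a.1, a.2 + f a.1) (b.1, b.2 + g b.1)) ∧
    (∀ a b, (fun p : G × G => (p.1, p.2 + f p.1)) (deform ψ q.2.2.2 a b) =
      deform ψ q'.2.2.2 (a.1, a.2 + g a.1) (b.1, b.2 + f b.1))

/-- Two `2`-cocycles are cohomologous: their difference is `δ_MPL((f, g))`. -/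
def CohomologousMPL (k : Type*) [Field k] {G H : Type*} [AddCommGroup G] [Module k G]
    [AddCommGroup H] [Module k H]
    (μ : G → G → G) (ν : H → H → H) (ρ : G → H → H) (ψ : H → G → G)
    (q q' : Quad G H) : Prop :=
  ∃ f : G →ₗ[k] G, ∃ g : H →ₗ[k] H,
    (∀ x y, q.1 x y - q'.1 x y = μ x (f y) - f (μ x y) + μ (f x) y) ∧
    (∀ h h', q.2.1 h h' - q'.2.1 h h' = ν h (g h') - g (ν h h') + ν (g h) h') ∧
    (∀ x h, q.2.2.1 x h - q'.2.2.1 x h = ρ x (g h) - g (ρ x h) + ρ (f x) h) ∧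
    (∀ h x, q.2.2.2 h x - q'.2.2.2 h x = ψ h (f x) - f (ψ h x) + ψ (g h) x)


namespace Bilin

variable {k : Type*} [Field k] {A B C : Type*} [AddCommGroup A] [Module k A]
  [AddCommGroup B] [Module k B] [AddCommGroup C] [Module k C] {f : A → B → C}

theorem map_add_left (hf : Bilin k f) (a a' : A) (b : B) : f (a + a') b = f a b + f a' b :=
  hf.1 a a' b

theorem map_smul_left (hf : Bilin k f) (c : k) (a : A) (b : B) : f (c • a) b = c • f a b :=
  hf.2.1 c a b

theorem map_add_right (hf : Bilin k f) (a : A) (b b' : B) : f a (b + b') = f a b + f a b' :=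
  hf.2.2.1 a b b'

theorem map_smul_right (hf : Bilin k f) (c : k) (a : A) (b : B) : f a (c • b) = c • f a b :=
  hf.2.2.2 c a b

def leftHom (hf : Bilin k f) (b : B) : A →+ C :=
  AddMonoidHom.mk' (f · b) fun a a' => hf.map_add_left a a' b

def rightHom (hf : Bilin k f) (a : A) : B →+ C :=
  AddMonoidHom.mk' (f a) (hf.map_add_right a)

theorem map_zero_left (hf : Bilin k f) (b : B) : f 0 b = 0 := (hf.leftHom b).map_zero

theorem map_zero_right (hf : Bilin k f) (a : A) : f a 0 = 0 := (hf.rightHom a).map_zero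

theorem map_neg_left (hf : Bilin k f) (a : A) (b : B) : f (-a) b = -f a b :=
  (hf.leftHom b).map_neg a

theorem map_neg_right (hf : Bilin k f) (a : A) (b : B) : f a (-b) = -f a b :=
  (hf.rightHom a).map_neg b

theorem map_sub_left (hf : Bilin k f) (a a' : A) (b : B) : f (a - a') b = f a b - f a' b :=
  (hf.leftHom b).map_sub a a'

theorem map_sub_right (hf : Bilin k f) (a : A) (b b' : B) : f a (b - b') = f a b - f a b' :=
  (hf.rightHom a).map_sub b b'

theorem eq_neg_swap {f : A → A → C} (hf : Bilin k f) (halt : ∀ a, f a a = 0) (a b : A) :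
    f a b = -f b a := by
  have h := halt (a + b)
  rw [hf.map_add_left, hf.map_add_right, hf.map_add_right, halt, halt, zero_add,
    add_zero] at h
  exact eq_neg_of_add_eq_zero_left h

end Bilin

section Equivalence

variable {k : Type*} [Field k]

theorem deform_morphism_iff {A B C : Type*} [AddCommGroup A] [Module k A] [AddCommGroup B]
    [Module k B] [AddCommGroup C] [Module k C] {f f₁ f₁' : A → B → C} (hf : Bilin k f)
    (α : A → A) (β : B → B) (γ : C → C) :
    (∀ a b, (fun p : C × C => (p.1, p.2 + γ p.1)) (deform f f₁ a b) =
      deform f f₁' (a.1, a.2 + α a.1) (b.1, b.2 + β b.1)) ↔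
    ∀ a b, f₁ a b - f₁' a b = f a (β b) - γ (f a b) + f (α a) b := by
  constructor
  · intro h a b
    have h₁ := congrArg Prod.snd (h (a, 0) (b, 0))
    simp only [deform, hf.map_zero_left, hf.map_zero_right, zero_add] at h₁
    linear_combination (norm := abel) h₁
  · intro h a b
    simp only [deform, Prod.mk.injEq, true_and, hf.map_add_left, hf.map_add_right]
    linear_combination (norm := abel) h a.1 b.1

theorem defEquiv_iff_cohomologousMPL {G H : Type*} [AddCommGroup G] [Module k G]
    [AddCommGroup H] [Module k H] {μ : G → G → G} {ν : H → H → H} {ρ : G → H → H}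
    {ψ : H → G → G} (hμ : Bilin k μ) (hν : Bilin k ν) (hρ : Bilin k ρ) (hψ : Bilin k ψ)
    (q q' : Quad G H) :
    DefEquiv k μ ν ρ ψ q q' ↔ CohomologousMPL k μ ν ρ ψ q q' :=
  exists_congr fun f => exists_congr fun g =>
    and_congr (deform_morphism_iff hμ f f f) <| and_congr (deform_morphism_iff hν g g g) <|
      and_congr (deform_morphism_iff hρ f g g) (deform_morphism_iff hψ g f f)

end Equivalence

section Bicross

variable {k : Type*} [Field k] {G H : Type*} [AddCommGroup G] [Module k G]
  [AddCommGroup H] [Module k H] {μ : G → G → G} {ν : H → H → H} {ρ : G → H → H}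
  {ψ : H → G → G}

theorem bilin_bicross (hμ : Bilin k μ) (hν : Bilin k ν) (hρ : Bilin k ρ) (hψ : Bilin k ψ) :
    Bilin k (bicross μ ν ρ ψ) := by
  refine ⟨fun a a' b => ?_, fun c a b => ?_, fun a b b' => ?_, fun c a b => ?_⟩ <;>
  simp only [bicross, Prod.fst_add, Prod.snd_add, Prod.smul_fst, Prod.smul_snd, Prod.mk_add_mk,
    Prod.smul_mk, hμ.map_add_left, hμ.map_add_right, hν.map_add_left, hν.map_add_right,
    hρ.map_add_left, hρ.map_add_right, hψ.map_add_left, hψ.map_add_right, hμ.map_smul_left,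
    hμ.map_smul_right, hν.map_smul_left, hν.map_smul_right, hρ.map_smul_left,
    hρ.map_smul_right, hψ.map_smul_left, hψ.map_smul_right, smul_add, smul_sub, Prod.mk.injEq] <;>
  constructor <;> abel

theorem bicross_self (haltμ : ∀ x, μ x x = 0) (haltν : ∀ h, ν h h = 0) (a : G × H) :
    bicross μ ν ρ ψ a a = 0 := by
  simp [bicross, haltμ, haltν]

theorem isMatchedPairP_iff_isLieBracketP_bicross (hμ : Bilin k μ) (hν : Bilin k ν)
    (hρ : Bilin k ρ) (hψ : Bilin k ψ) (haltμ : ∀ x, μ x x = 0) (haltν : ∀ h, ν h h = 0) :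
    IsMatchedPairP k μ ν ρ ψ ↔ IsLieBracketP k (bicross μ ν ρ ψ) := by
  have antiμ := hμ.eq_neg_swap haltμ
  have antiν := hν.eq_neg_swap haltν
  constructor
  · rintro ⟨⟨-, -, jacμ⟩, ⟨-, -, jacν⟩, ⟨-, repρ⟩, ⟨-, repψ⟩, compρ, compψ⟩
    refine ⟨bilin_bicross hμ hν hρ hψ, bicross_self haltμ haltν, ?_⟩
    rintro ⟨x₁, h₁⟩ ⟨x₂, h₂⟩ ⟨x₃, h₃⟩
    simp only [bicross, Prod.mk_add_mk, Prod.mk_eq_zero, hμ.map_add_left, hμ.map_sub_left,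
      hν.map_add_left, hν.map_sub_left, hρ.map_add_left, hρ.map_add_right, hρ.map_sub_left,
      hρ.map_sub_right, hψ.map_add_left, hψ.map_add_right, hψ.map_sub_left, hψ.map_sub_right]
    constructor
    · linear_combination (norm := abel) jacμ x₁ x₂ x₃ + repψ h₁ h₂ x₃ + repψ h₂ h₃ x₁
        + repψ h₃ h₁ x₂ - compψ h₃ x₁ x₂ - compψ h₁ x₂ x₃ - compψ h₂ x₃ x₁
        - antiμ (ψ h₁ x₃) x₂ - antiμ (ψ h₂ x₁) x₃ - antiμ (ψ h₃ x₂) x₁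
    · linear_combination (norm := abel) jacν h₁ h₂ h₃ + repρ x₁ x₂ h₃ + repρ x₂ x₃ h₁
        + repρ x₃ x₁ h₂ - compρ x₃ h₁ h₂ - compρ x₁ h₂ h₃ - compρ x₂ h₃ h₁
        - antiν (ρ x₁ h₃) h₂ - antiν (ρ x₂ h₁) h₃ - antiν (ρ x₃ h₂) h₁
  · rintro ⟨-, -, jac⟩
    refine ⟨⟨hμ, haltμ, fun x y z => ?_⟩, ⟨hν, haltν, fun x y z => ?_⟩, ⟨hρ, fun x y z => ?_⟩,
      ⟨hψ, fun x y z => ?_⟩, fun x y z => ?_, fun x y z => ?_⟩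
    · have j := jac (x, 0) (y, 0) (z, 0)
      simp only [bicross, Prod.mk_add_mk, Prod.mk_eq_zero, hν.map_zero_left, hρ.map_zero_right,
        hψ.map_zero_left, add_zero, sub_zero] at j
      linear_combination (norm := abel) j.1
    · have j := jac (0, x) (0, y) (0, z)
      simp only [bicross, Prod.mk_add_mk, Prod.mk_eq_zero, hμ.map_zero_left, hρ.map_zero_left,
        hψ.map_zero_right, add_zero, sub_zero] at j
      linear_combination (norm := abel) j.2
    · have j := jac (x, 0) (y, 0) (0, z)
      simp only [bicross, Prod.mk_add_mk, Prod.mk_eq_zero, hμ.map_zero_left, hμ.map_zero_right,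
        hν.map_zero_left, hν.map_zero_right, hρ.map_zero_left, hρ.map_zero_right,
        hψ.map_zero_left, hμ.map_neg_left, hρ.map_neg_right, hψ.map_neg_left, add_zero, zero_add,
        sub_zero, zero_sub, neg_neg] at j
      linear_combination (norm := abel) j.2
    · have j := jac (0, x) (0, y) (z, 0)
      simp only [bicross, Prod.mk_add_mk, Prod.mk_eq_zero, hμ.map_zero_left, hμ.map_zero_right,
        hν.map_zero_left, hν.map_zero_right, hρ.map_zero_left, hψ.map_zero_left,
        hψ.map_zero_right, hν.map_neg_left, hρ.map_neg_left, hψ.map_neg_right, add_zero, zero_add,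
        sub_zero, zero_sub, neg_neg] at j
      linear_combination (norm := abel) j.1
    · have j := jac (x, 0) (0, y) (0, z)
      simp only [bicross, Prod.mk_add_mk, Prod.mk_eq_zero, hμ.map_zero_left, hμ.map_zero_right,
        hν.map_zero_left, hν.map_zero_right, hρ.map_zero_left, hψ.map_zero_left,
        hψ.map_zero_right, hν.map_neg_left, hρ.map_neg_left, hψ.map_neg_right, add_zero, zero_add,
        sub_zero, zero_sub, neg_neg] at j
      linear_combination (norm := abel) -j.2 - antiν (ρ x z) y
    · have j := jac (0, x) (y, 0) (z, 0)
      simp only [bicross, Prod.mk_add_mk, Prod.mk_eq_zero, hμ.map_zero_left, hμ.map_zero_right,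
        hν.map_zero_left, hν.map_zero_right, hρ.map_zero_left, hρ.map_zero_right,
        hψ.map_zero_left, hμ.map_neg_left, hρ.map_neg_right, hψ.map_neg_left, add_zero, zero_add,
        sub_zero, zero_sub, neg_neg] at j
      linear_combination (norm := abel) -j.1 - antiμ (ψ x z) y

theorem IsMatchedPairP.isLieBracketP_bicross (hmp : IsMatchedPairP k μ ν ρ ψ) :
    IsLieBracketP k (bicross μ ν ρ ψ) :=
  have ⟨⟨hμ, haltμ, _⟩, ⟨hν, haltν, _⟩, ⟨hρ, _⟩, ⟨hψ, _⟩, _⟩ := hmp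
  (isMatchedPairP_iff_isLieBracketP_bicross hμ hν hρ hψ haltμ haltν).mp hmp

end Bicross

section Deform

variable {k : Type*} [Field k] {M N : Type*} [AddCommGroup M] [Module k M] [AddCommGroup N]
  [Module k N]

theorem IsLieBracketP.map_linearEquiv {F : M → M → M} (hF : IsLieBracketP k F) (e : M ≃ₗ[k] N)
    {F' : N → N → N} (h : ∀ u v, F' (e u) (e v) = e (F u v)) : IsLieBracketP k F' := by
  obtain ⟨hb, halt, hjac⟩ := hF
  have hF' : ∀ x y, F' x y = e (F (e.symm x) (e.symm y)) := fun x y => by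
    simpa using h (e.symm x) (e.symm y)
  refine ⟨⟨fun a a' b => ?_, fun c a b => ?_, fun a b b' => ?_, fun c a b => ?_⟩,
    fun a => ?_, fun a b c => ?_⟩
  all_goals simp only [hF', LinearEquiv.symm_apply_apply, map_add, map_smul, hb.map_add_left,
    hb.map_add_right, hb.map_smul_left, hb.map_smul_right, halt, map_zero]
  rw [← map_add, ← map_add, hjac, map_zero]

theorem isLieBracketP_iff_of_linearEquiv (e : M ≃ₗ[k] N) {F : M → M → M} {F' : N → N → N}
    (h : ∀ u v, F' (e u) (e v) = e (F u v)) : IsLieBracketP k F' ↔ IsLieBracketP k F :=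
  ⟨fun hF' => hF'.map_linearEquiv e.symm fun u v => e.injective <| by simp [← h],
    fun hF => hF.map_linearEquiv e h⟩

theorem bilin_deform {A B C : Type*} [AddCommGroup A] [Module k A] [AddCommGroup B] [Module k B]
    [AddCommGroup C] [Module k C] {f f₁ : A → B → C} (hf : Bilin k f) (hf₁ : Bilin k f₁) :
    Bilin k (deform f f₁) := by
  refine ⟨fun a a' b => ?_, fun c a b => ?_, fun a b b' => ?_, fun c a b => ?_⟩ <;>
  simp only [deform, Prod.fst_add, Prod.snd_add, Prod.smul_fst, Prod.smul_snd, Prod.mk_add_mk,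
    Prod.smul_mk, hf.map_add_left, hf.map_add_right, hf.map_smul_left, hf.map_smul_right,
    hf₁.map_add_left, hf₁.map_add_right, hf₁.map_smul_left, hf₁.map_smul_right, smul_add,
    Prod.mk.injEq, true_and] <;>
  abel

theorem deform_self {f f₁ : M → M → N} (hf : Bilin k f) (halt : ∀ a, f a a = 0)
    (halt₁ : ∀ a, f₁ a a = 0) (a : M × M) : deform f f₁ a a = 0 := by
  simp [deform, halt, halt₁, hf.eq_neg_swap halt a.1 a.2]

/-- The `t`-coefficient of the Jacobiator of `B + t B₁`. -/
def jacobiatorLin (B B₁ : M → M → M) (x y z : M) : M :=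
  B (B₁ x y) z + B₁ (B x y) z + (B (B₁ y z) x + B₁ (B y z) x) + (B (B₁ z x) y + B₁ (B z x) y)

theorem isLieBracketP_deform_iff {B B₁ : M → M → M} (hB : IsLieBracketP k B)
    (hB₁ : Bilin k B₁) (halt₁ : ∀ x, B₁ x x = 0) :
    IsLieBracketP k (deform B B₁) ↔ ∀ x y z, jacobiatorLin B B₁ x y z = 0 := by
  obtain ⟨hb, halt, jac⟩ := hB
  constructor
  · rintro ⟨-, -, jac'⟩ x y z
    have j := congrArg Prod.snd (jac' (x, 0) (y, 0) (z, 0))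
    simp only [deform, Prod.snd_add, hb.map_zero_left, hb.map_zero_right, add_zero, zero_add,
      Prod.snd_zero] at j
    exact j
  · intro hlin
    unfold jacobiatorLin at hlin
    refine ⟨bilin_deform hb hB₁, deform_self hb halt halt₁, fun a b c => ?_⟩
    simp only [deform, hb.map_add_left, Prod.mk_add_mk, Prod.mk_eq_zero]
    refine ⟨jac a.1 b.1 c.1, ?_⟩
    linear_combination (norm := abel)
      jac a.1 b.1 c.2 + jac a.1 b.2 c.1 + jac a.2 b.1 c.1 + hlin a.1 b.1 c.1

end Deform

section NijenhuisRichardson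

open Equiv in
theorem insNR_one_one {A : Type*} [AddCommGroup A] (f g : (Fin 2 → A) → A) (x : Fin 3 → A) :
    insNR 1 1 f g x
      = g ![f ![x 0, x 1], x 2] - g ![f ![x 0, x 2], x 1] + g ![f ![x 1, x 2], x 0] := by
  have huniv : (Finset.univ : Finset (Perm (Fin 3)))
      = {1, swap 0 1, swap 0 2, swap 1 2, swap 0 1 * swap 1 2, swap 0 2 * swap 1 2} := by decide
  have hcons : ∀ σ : Perm (Fin 3),
      (Fin.cons (f fun i : Fin 2 => x (σ ⟨i, by omega⟩))
        (fun i : Fin 1 => x (σ ⟨1 + 1 + i, by omega⟩)) : Fin 2 → A)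
      = ![f ![x (σ 0), x (σ 1)], x (σ 2)] := by
    intro σ
    ext i
    fin_cases i
    · exact congrArg f (by ext j; fin_cases j <;> rfl)
    · rfl
  simp only [insNR, hcons, huniv]
  simp +decide [Finset.sum_insert]
  abel

variable {k : Type*} [Field k] {M : Type*} [AddCommGroup M] [Module k M]

theorem nrB_one_one_eq_jacobiatorLin {F F₁ : M → M → M} (hF : Bilin k F) (haltF : ∀ a, F a a = 0)
    (hF₁ : Bilin k F₁) (haltF₁ : ∀ a, F₁ a a = 0) (x : Fin 3 → M) :
    nrB 1 1 (fun y => F (y 0) (y 1)) (fun y => F₁ (y 0) (y 1)) x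
      = jacobiatorLin F F₁ (x 0) (x 1) (x 2) := by
  have hx : (fun i : Fin (1 + 1 + 1) => x ⟨i, by omega⟩) = x := rfl
  simp only [nrB, hx, insNR_one_one, Matrix.cons_val_zero, Matrix.cons_val_one]
  rw [jacobiatorLin, hF.eq_neg_swap haltF (x 2), hF₁.eq_neg_swap haltF₁ (x 2), hF.map_neg_left,
    hF₁.map_neg_left]
  simp only [mul_one, pow_one, neg_one_smul, sub_neg_eq_add]
  abel

end NijenhuisRichardson

section Cocycle

variable {k : Type*} [Field k] {G H : Type*} [AddCommGroup G] [Module k G]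
  [AddCommGroup H] [Module k H] {μ : G → G → G} {ν : H → H → H} {ρ : G → H → H}
  {ψ : H → G → G}

theorem bicross_deform_prodProdProdComm (μ₁ : G → G → G) (ν₁ : H → H → H) (ρ₁ : G → H → H)
    (ψ₁ : H → G → G) (u v : (G × H) × (G × H)) :
    bicross (deform μ μ₁) (deform ν ν₁) (deform ρ ρ₁) (deform ψ ψ₁)
        (LinearEquiv.prodProdProdComm k G H G H u) (LinearEquiv.prodProdProdComm k G H G H v) =
      LinearEquiv.prodProdProdComm k G H G H
        (deform (bicross μ ν ρ ψ) (bicross μ₁ ν₁ ρ₁ ψ₁) u v) := by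
  simp only [Prod.ext_iff, LinearEquiv.prodProdProdComm_apply, bicross, deform, Prod.fst_add,
    Prod.snd_add, Prod.fst_sub, Prod.snd_sub, true_and]
  constructor <;> abel

theorem isInfDef_iff_isCocycleMPL (hmp : IsMatchedPairP k μ ν ρ ψ) (q : Quad G H) :
    IsInfDef k μ ν ρ ψ q ↔ IsCocycleMPL k μ ν ρ ψ q := by
  obtain ⟨q₁, q₂, q₃, q₄⟩ := q
  refine and_congr_right fun ⟨h₁, h₂, h₃, h₄, halt₁, halt₂⟩ => ?_
  have hπ := hmp.isLieBracketP_bicross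
  obtain ⟨⟨hμ, haltμ, -⟩, ⟨hν, haltν, -⟩, ⟨hρ, -⟩, ⟨hψ, -⟩, -⟩ := hmp
  have hπ₁ := bilin_bicross h₁ h₂ h₃ h₄
  have haltπ₁ : ∀ a, bicross q₁ q₂ q₃ q₄ a a = 0 := bicross_self halt₁ halt₂
  calc IsMatchedPairP k (deform μ q₁) (deform ν q₂) (deform ρ q₃) (deform ψ q₄)
      ↔ IsLieBracketP k (bicross (deform μ q₁) (deform ν q₂) (deform ρ q₃) (deform ψ q₄)) :=
        isMatchedPairP_iff_isLieBracketP_bicross (bilin_deform hμ h₁) (bilin_deform hν h₂)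
          (bilin_deform hρ h₃) (bilin_deform hψ h₄) (deform_self hμ haltμ halt₁)
          (deform_self hν haltν halt₂)
    _ ↔ IsLieBracketP k (deform (bicross μ ν ρ ψ) (bicross q₁ q₂ q₃ q₄)) :=
        isLieBracketP_iff_of_linearEquiv _ (bicross_deform_prodProdProdComm q₁ q₂ q₃ q₄)
    _ ↔ ∀ x y z, jacobiatorLin (bicross μ ν ρ ψ) (bicross q₁ q₂ q₃ q₄) x y z = 0 :=
        isLieBracketP_deform_iff hπ hπ₁ haltπ₁
    _ ↔ ∀ x : Fin 3 → G × H, nrB 1 1 (mcElt μ ν ρ ψ) (mcElt q₁ q₂ q₃ q₄) x = 0 := by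
        have hnr := nrB_one_one_eq_jacobiatorLin hπ.1 hπ.2.1 hπ₁ haltπ₁
        exact ⟨fun h x => (hnr x).trans (h _ _ _), fun h x y z => (hnr ![x, y, z]).symm.trans (h _)⟩

end Cocycle

theorem deformations_classified_by_H2_general
    (k : Type*) [Field k] {G H : Type*}
    [AddCommGroup G] [Module k G] [AddCommGroup H] [Module k H]
    (μ : G → G → G) (ν : H → H → H) (ρ : G → H → H) (ψ : H → G → G)
    (hmp : IsMatchedPairP k μ ν ρ ψ) :
    (∀ q q' : Quad G H, IsInfDef k μ ν ρ ψ q → IsInfDef k μ ν ρ ψ q' →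
      (DefEquiv k μ ν ρ ψ q q' ↔ CohomologousMPL k μ ν ρ ψ q q')) ∧
    (∃ e : Quot (fun d d' : {q : Quad G H // IsInfDef k μ ν ρ ψ q} =>
              DefEquiv k μ ν ρ ψ d.1 d'.1) ≃
           Quot (fun c c' : {q : Quad G H // IsCocycleMPL k μ ν ρ ψ q} =>
              CohomologousMPL k μ ν ρ ψ c.1 c'.1),
      ∀ (d : {q : Quad G H // IsInfDef k μ ν ρ ψ q})
        (c : {q : Quad G H // IsCocycleMPL k μ ν ρ ψ q}),
        d.1 = c.1 → e (Quot.mk _ d) = Quot.mk _ c) := by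
  have hequiv : ∀ q q' : Quad G H, DefEquiv k μ ν ρ ψ q q' ↔ CohomologousMPL k μ ν ρ ψ q q' := by
    obtain ⟨⟨hμ, -⟩, ⟨hν, -⟩, ⟨hρ, -⟩, ⟨hψ, -⟩, -⟩ := hmp
    exact defEquiv_iff_cohomologousMPL hμ hν hρ hψ
  let e := Equiv.subtypeEquivRight (isInfDef_iff_isCocycleMPL hmp)
  refine ⟨fun q q' _ _ => hequiv q q',
    Quot.congr e fun d d' => hequiv d.1 d'.1, fun d c hdc => ?_⟩
  exact (Quot.congr_mk _ _ d).trans (congrArg _ (Subtype.ext hdc))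

/-- Two infinitesimal deformations of a matched pair of Lie algebras are
equivalent iff the corresponding `2`-cocycles are cohomologous (their difference being
`δ_MPL((f,g))`); hence equivalence classes of infinitesimal deformations are in bijection
with `H²_MPL(𝔤, 𝔥, ρ, ψ)`. -/
theorem deformations_classified_by_H2
    (k : Type*) [Field k] [CharZero k] {G H : Type*}
    [AddCommGroup G] [Module k G] [AddCommGroup H] [Module k H]
    (μ : G → G → G) (ν : H → H → H) (ρ : G → H → H) (ψ : H → G → G)
    (hmp : IsMatchedPairP k μ ν ρ ψ) :
    (∀ q q' : Quad G H, IsInfDef k μ ν ρ ψ q → IsInfDef k μ ν ρ ψ q' →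
      (DefEquiv k μ ν ρ ψ q q' ↔ CohomologousMPL k μ ν ρ ψ q q')) ∧
    (∃ e : Quot (fun d d' : {q : Quad G H // IsInfDef k μ ν ρ ψ q} =>
              DefEquiv k μ ν ρ ψ d.1 d'.1) ≃
           Quot (fun c c' : {q : Quad G H // IsCocycleMPL k μ ν ρ ψ q} =>
              CohomologousMPL k μ ν ρ ψ c.1 c'.1),
      ∀ (d : {q : Quad G H // IsInfDef k μ ν ρ ψ q})
        (c : {q : Quad G H // IsCocycleMPL k μ ν ρ ψ q}),
        d.1 = c.1 → e (Quot.mk _ d) = Quot.mk _ c) :=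
  deformations_classified_by_H2_general k μ ν ρ ψ hmp
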